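/- arXiv:1603.07880 — 8 statements merged into one kernel-verified Lean document; each statement's English description precedes it below -/
import Mathlib

section
/- Let X be a complex Banach space, T a bounded linear operator on X, and (M,N) closed T-invariant subspaces with X = M ⊕ N. Then T has finite descent if and only if both T_M and T_N have finite descent, and in that case dsc(T) = max{dsc(T_M), dsc(T_N)}. -/
open Filter Topology

noncomputable def clmRestrict {X : Type*} [NormedAddCommGroup X] [NormedSpace ℂ X]
    (T : X →L[ℂ] X) (M : Submodule ℂ X) (h : ∀ x ∈ M, T x ∈ M) : M →L[ℂ] M :=
  { toLinearMap := (T : X →ₗ[ℂ] X).restrict h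
    cont := by
      apply Continuous.subtype_mk
      exact T.continuous.comp continuous_subtype_val }

/-!
The range of `T ^ n` splits as the direct sum of the ranges of `T_M ^ n` and `T_N ^ n`, and by
the modular law each summand is recovered by intersecting with `M`, resp. `N`. Hence
`R(T ^ n) = R(T ^ (n + 1))` holds iff it holds for both restrictions, i.e. the descent set of `T`
is the intersection of those of `T_M` and `T_N`. Descent sets are upward closed subsets of `ℕ`,
so such an intersection is nonempty iff both are, and its least element is the larger of the two
least elements.
-/

section UpperSet

variable {α : Type*}

theorem IsUpperSet.inter_nonempty_iff [LinearOrder α] {s t : Set α} (hs : IsUpperSet s)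
    (ht : IsUpperSet t) : (s ∩ t).Nonempty ↔ s.Nonempty ∧ t.Nonempty :=
  ⟨fun ⟨x, hxs, hxt⟩ => ⟨⟨x, hxs⟩, ⟨x, hxt⟩⟩, fun ⟨⟨a, ha⟩, ⟨b, hb⟩⟩ =>
    ⟨max a b, hs (le_max_left a b) ha, ht (le_max_right a b) hb⟩⟩

theorem IsUpperSet.sInf_inter [ConditionallyCompleteLinearOrder α] [WellFoundedLT α]
    {s t : Set α} (hs : IsUpperSet s) (ht : IsUpperSet t) (hs' : s.Nonempty) (ht' : t.Nonempty) :
    sInf (s ∩ t) = max (sInf s) (sInf t) := by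
  obtain ⟨a, rfl⟩ := hs.eq_empty_or_Ici.resolve_left hs'.ne_empty
  obtain ⟨b, rfl⟩ := ht.eq_empty_or_Ici.resolve_left ht'.ne_empty
  rw [Set.Ici_inter_Ici, csInf_Ici, csInf_Ici, csInf_Ici]

end UpperSet

namespace LinearMap

variable {R V : Type*} [Ring R] [AddCommGroup V] [Module R V] {p q : Submodule R V}

theorem map_subtype_range_restrict (f : V →ₗ[R] V) (hp : ∀ x ∈ p, f x ∈ p) :
    (range (f.restrict hp)).map p.subtype = p.map f := by
  rw [range_restrict, Submodule.map_comap_subtype, inf_eq_right, Submodule.map_le_iff_le_comap]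
  exact hp

theorem range_eq_map_sup_map (f : V →ₗ[R] V) (hpq : Codisjoint p q) :
    range f = p.map f ⊔ q.map f := by
  rw [range_eq_map, ← hpq.eq_top, Submodule.map_sup]

theorem range_inf_eq_map_of_isCompl (f : V →ₗ[R] V) (hpq : IsCompl p q)
    (hp : ∀ x ∈ p, f x ∈ p) (hq : ∀ x ∈ q, f x ∈ q) : range f ⊓ p = p.map f := by
  have hfp : p.map f ≤ p := Submodule.map_le_iff_le_comap.mpr hp
  have hfq : q.map f ≤ q := Submodule.map_le_iff_le_comap.mpr hq
  rw [range_eq_map_sup_map f hpq.codisjoint, sup_inf_assoc_of_le _ hfp,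
    (hpq.disjoint.symm.mono_left hfq).eq_bot, sup_bot_eq]

theorem range_eq_range_iff_of_isCompl {f g : V →ₗ[R] V} (hpq : IsCompl p q)
    (hfp : ∀ x ∈ p, f x ∈ p) (hfq : ∀ x ∈ q, f x ∈ q)
    (hgp : ∀ x ∈ p, g x ∈ p) (hgq : ∀ x ∈ q, g x ∈ q) :
    range f = range g ↔ p.map f = p.map g ∧ q.map f = q.map g := by
  constructor
  · intro h
    rw [← range_inf_eq_map_of_isCompl f hpq hfp hfq, ← range_inf_eq_map_of_isCompl g hpq hgp hgq,
      ← range_inf_eq_map_of_isCompl f hpq.symm hfq hfp,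
      ← range_inf_eq_map_of_isCompl g hpq.symm hgq hgp, h]
    exact ⟨rfl, rfl⟩
  · rintro ⟨hp, hq⟩
    rw [range_eq_map_sup_map f hpq.codisjoint, range_eq_map_sup_map g hpq.codisjoint, hp, hq]

end LinearMap

namespace Module.End

open LinearMap

variable {R V : Type*} [Ring R] [AddCommGroup V] [Module R V]

/-- `dsc f = sInf (descentSet f)` when this set is nonempty; otherwise `sInf` gives the junk
value `0` instead of `∞`. -/
def descentSet (f : Module.End R V) : Set ℕ :=
  {n | range (f ^ n) = range (f ^ (n + 1))}

theorem isUpperSet_descentSet (f : Module.End R V) : IsUpperSet (descentSet f) := by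
  intro n m hnm hn
  induction m, hnm using Nat.le_induction with
  | base => exact hn
  | succ m _ ih =>
    change range (f ^ (m + 1)) = range (f ^ (m + 1 + 1))
    rw [pow_succ', pow_succ' f (m + 1), mul_eq_comp, mul_eq_comp, range_comp, range_comp]
    exact congrArg (Submodule.map f) ih

theorem mem_descentSet_restrict_iff {f : Module.End R V} {p : Submodule R V}
    (hp : ∀ x ∈ p, f x ∈ p) (n : ℕ) :
    n ∈ descentSet (f.restrict hp) ↔ p.map (f ^ n) = p.map (f ^ (n + 1)) := by
  rw [descentSet, Set.mem_ofPred_eq, pow_restrict n hp, pow_restrict (n + 1) hp,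
    ← (Submodule.map_injective_of_injective p.injective_subtype).eq_iff,
    map_subtype_range_restrict, map_subtype_range_restrict]

theorem descentSet_eq_inter_of_isCompl {f : Module.End R V} {p q : Submodule R V}
    (hpq : IsCompl p q) (hp : ∀ x ∈ p, f x ∈ p) (hq : ∀ x ∈ q, f x ∈ q) :
    descentSet f = descentSet (f.restrict hp) ∩ descentSet (f.restrict hq) := by
  ext n
  rw [Set.mem_inter_iff, mem_descentSet_restrict_iff, mem_descentSet_restrict_iff]
  exact range_eq_range_iff_of_isCompl hpq (pow_apply_mem_of_forall_mem n hp)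
    (pow_apply_mem_of_forall_mem n hq) (pow_apply_mem_of_forall_mem (n + 1) hp)
    (pow_apply_mem_of_forall_mem (n + 1) hq)

end Module.End

theorem stmt_5_general {X : Type*} [NormedAddCommGroup X] [NormedSpace ℂ X]
    (T : X →L[ℂ] X) (M N : Submodule ℂ X)
    (hM : ∀ x ∈ M, T x ∈ M) (hN : ∀ x ∈ N, T x ∈ N)
    (hcompl : IsCompl M N) :
    ((∃ n : ℕ, LinearMap.range ((T ^ n : X →L[ℂ] X) : X →ₗ[ℂ] X) = LinearMap.range ((T ^ (n + 1) : X →L[ℂ] X) : X →ₗ[ℂ] X)) ↔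
      ((∃ n : ℕ, LinearMap.range (((clmRestrict T M hM) ^ n : ↥M →L[ℂ] ↥M) : ↥M →ₗ[ℂ] ↥M) =
          LinearMap.range (((clmRestrict T M hM) ^ (n + 1) : ↥M →L[ℂ] ↥M) : ↥M →ₗ[ℂ] ↥M)) ∧
       (∃ n : ℕ, LinearMap.range (((clmRestrict T N hN) ^ n : ↥N →L[ℂ] ↥N) : ↥N →ₗ[ℂ] ↥N) =
          LinearMap.range (((clmRestrict T N hN) ^ (n + 1) : ↥N →L[ℂ] ↥N) : ↥N →ₗ[ℂ] ↥N)))) ∧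
    ((∃ n : ℕ, LinearMap.range ((T ^ n : X →L[ℂ] X) : X →ₗ[ℂ] X) = LinearMap.range ((T ^ (n + 1) : X →L[ℂ] X) : X →ₗ[ℂ] X)) →
      sInf {n : ℕ | LinearMap.range ((T ^ n : X →L[ℂ] X) : X →ₗ[ℂ] X) = LinearMap.range ((T ^ (n + 1) : X →L[ℂ] X) : X →ₗ[ℂ] X)} =
        max (sInf {n : ℕ | LinearMap.range (((clmRestrict T M hM) ^ n : ↥M →L[ℂ] ↥M) : ↥M →ₗ[ℂ] ↥M) =
              LinearMap.range (((clmRestrict T M hM) ^ (n + 1) : ↥M →L[ℂ] ↥M) : ↥M →ₗ[ℂ] ↥M)})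
            (sInf {n : ℕ | LinearMap.range (((clmRestrict T N hN) ^ n : ↥N →L[ℂ] ↥N) : ↥N →ₗ[ℂ] ↥N) =
              LinearMap.range (((clmRestrict T N hN) ^ (n + 1) : ↥N →L[ℂ] ↥N) : ↥N →ₗ[ℂ] ↥N)})) := by
  simp only [ContinuousLinearMap.toLinearMap_pow]
  have hsplit := Module.End.descentSet_eq_inter_of_isCompl (f := (T : X →ₗ[ℂ] X)) hcompl hM hN
  have hupM := Module.End.isUpperSet_descentSet ((T : X →ₗ[ℂ] X).restrict hM)
  have hupN := Module.End.isUpperSet_descentSet ((T : X →ₗ[ℂ] X).restrict hN)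
  have hnonempty := hupM.inter_nonempty_iff hupN
  rw [← hsplit] at hnonempty
  -- the goal matches these statements once `descentSet` and `clmRestrict` are unfolded
  refine ⟨hnonempty, fun hT => ?_⟩
  obtain ⟨hM', hN'⟩ := hnonempty.mp hT
  have hdescent := hupM.sInf_inter hupN hM' hN'
  rwa [← hsplit] at hdescent

/-- Finite descent iff both restrictions have finite descent, and then the
descent is the max of the two descents. -/
theorem stmt_5 {X : Type*} [NormedAddCommGroup X] [NormedSpace ℂ X] [CompleteSpace X]
    (T : X →L[ℂ] X) (M N : Submodule ℂ X)
    (hMc : IsClosed (M : Set X)) (hNc : IsClosed (N : Set X))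
    (hM : ∀ x ∈ M, T x ∈ M) (hN : ∀ x ∈ N, T x ∈ N)
    (hcompl : IsCompl M N) :
    ((∃ n : ℕ, LinearMap.range ((T ^ n : X →L[ℂ] X) : X →ₗ[ℂ] X) = LinearMap.range ((T ^ (n + 1) : X →L[ℂ] X) : X →ₗ[ℂ] X)) ↔
      ((∃ n : ℕ, LinearMap.range (((clmRestrict T M hM) ^ n : ↥M →L[ℂ] ↥M) : ↥M →ₗ[ℂ] ↥M) =
          LinearMap.range (((clmRestrict T M hM) ^ (n + 1) : ↥M →L[ℂ] ↥M) : ↥M →ₗ[ℂ] ↥M)) ∧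
       (∃ n : ℕ, LinearMap.range (((clmRestrict T N hN) ^ n : ↥N →L[ℂ] ↥N) : ↥N →ₗ[ℂ] ↥N) =
          LinearMap.range (((clmRestrict T N hN) ^ (n + 1) : ↥N →L[ℂ] ↥N) : ↥N →ₗ[ℂ] ↥N)))) ∧
    ((∃ n : ℕ, LinearMap.range ((T ^ n : X →L[ℂ] X) : X →ₗ[ℂ] X) = LinearMap.range ((T ^ (n + 1) : X →L[ℂ] X) : X →ₗ[ℂ] X)) →
      sInf {n : ℕ | LinearMap.range ((T ^ n : X →L[ℂ] X) : X →ₗ[ℂ] X) = LinearMap.range ((T ^ (n + 1) : X →L[ℂ] X) : X →ₗ[ℂ] X)} =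
        max (sInf {n : ℕ | LinearMap.range (((clmRestrict T M hM) ^ n : ↥M →L[ℂ] ↥M) : ↥M →ₗ[ℂ] ↥M) =
              LinearMap.range (((clmRestrict T M hM) ^ (n + 1) : ↥M →L[ℂ] ↥M) : ↥M →ₗ[ℂ] ↥M)})
            (sInf {n : ℕ | LinearMap.range (((clmRestrict T N hN) ^ n : ↥N →L[ℂ] ↥N) : ↥N →ₗ[ℂ] ↥N) =
              LinearMap.range (((clmRestrict T N hN) ^ (n + 1) : ↥N →L[ℂ] ↥N) : ↥N →ₗ[ℂ] ↥N)})) :=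
  stmt_5_general T M N hM hN hcompl
end

section
/- Let X be a complex Banach space and T a bounded linear operator such that T = T_M ⊕ T_N with respect to a topological direct sum X = M ⊕ N of closed T-invariant subspaces, where T_M is bounded below and T_N is quasinilpotent. Then there exists ε > 0 such that T − λ is bounded below for all complex λ with 0 < |λ| < ε; i.e., 0 is not an accumulation point of the approximate point spectrum of T. -/
/-!
For `‖λ‖` below the lower bound `c` of `T_M`, the perturbation `T_M - λ` is still bounded below
(by `c - ‖λ‖`); for `λ ≠ 0`, `λ` lies in the resolvent set of the quasinilpotent `T_N`, so
`T_N - λ` is invertible and hence bounded below. By the closed graph theorem the projections of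
`X = M ⊕ N` are bounded, and they commute with `T - λ` because both summands are invariant, so
the two lower bounds glue to one on `X`.
-/

open Filter Topology

section BoundedBelow

variable {𝕜 E F : Type*} [NontriviallyNormedField 𝕜] [NormedAddCommGroup E] [NormedSpace 𝕜 E]
  [NormedAddCommGroup F] [NormedSpace 𝕜 F]

def IsBoundedBelow (A : E →L[𝕜] F) : Prop :=
  ∃ c > (0 : ℝ), ∀ x, c * ‖x‖ ≤ ‖A x‖

theorem isBoundedBelow_iff_exists_norm_le_mul {A : E →L[𝕜] F} :
    IsBoundedBelow A ↔ ∃ K ≥ (0 : ℝ), ∀ x, ‖x‖ ≤ K * ‖A x‖ := by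
  constructor
  · rintro ⟨c, hc, hA⟩
    exact ⟨c⁻¹, by positivity, fun x => by rw [inv_mul_eq_div, le_div_iff₀' hc]; exact hA x⟩
  · rintro ⟨K, hK, hA⟩
    refine ⟨(K + 1)⁻¹, by positivity, fun x => ?_⟩
    rw [inv_mul_eq_div, div_le_iff₀' (by positivity)]
    nlinarith [hA x, norm_nonneg (A x)]

theorem isBoundedBelow_sub_of_norm_lt {A B : E →L[𝕜] F} {c : ℝ} (hA : ∀ x, c * ‖x‖ ≤ ‖A x‖)
    (hB : ‖B‖ < c) : IsBoundedBelow (A - B) := by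
  refine ⟨c - ‖B‖, sub_pos.mpr hB, fun x => ?_⟩
  calc (c - ‖B‖) * ‖x‖ = c * ‖x‖ - ‖B‖ * ‖x‖ := by ring
    _ ≤ ‖A x‖ - ‖B x‖ := sub_le_sub (hA x) (B.le_opNorm x)
    _ ≤ ‖(A - B) x‖ := norm_sub_norm_le _ _

theorem isBoundedBelow_sub_smul_one_of_norm_lt {A : E →L[𝕜] E} {c : ℝ}
    (hA : ∀ x, c * ‖x‖ ≤ ‖A x‖) {l : 𝕜} (hl : ‖l‖ < c) : IsBoundedBelow (A - l • 1) :=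
  isBoundedBelow_sub_of_norm_lt hA <| (norm_smul_le l (1 : E →L[𝕜] E)).trans_lt <|
    (mul_le_of_le_one_right (norm_nonneg l) ContinuousLinearMap.norm_id_le).trans_lt hl

theorem isBoundedBelow_of_isUnit {A : E →L[𝕜] E} (hA : IsUnit A) : IsBoundedBelow A := by
  obtain ⟨u, rfl⟩ := hA
  refine isBoundedBelow_iff_exists_norm_le_mul.mpr
    ⟨‖(↑u⁻¹ : E →L[𝕜] E)‖, norm_nonneg _, fun x => ?_⟩
  calc ‖x‖ = ‖(↑u⁻¹ : E →L[𝕜] E) ((u : E →L[𝕜] E) x)‖ :=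
      congrArg norm (DFunLike.congr_fun u.inv_mul x).symm
    _ ≤ _ := ContinuousLinearMap.le_opNorm _ _

theorem isBoundedBelow_sub_smul_one_of_mem_resolventSet {S : E →L[𝕜] E} {l : 𝕜}
    (hl : l ∈ resolventSet 𝕜 S) : IsBoundedBelow (S - l • 1) := by
  rw [spectrum.mem_resolventSet_iff, ← IsUnit.neg_iff, neg_sub,
    Algebra.algebraMap_eq_smul_one] at hl
  exact isBoundedBelow_of_isUnit hl

theorem isBoundedBelow_sub_smul_one_of_spectralRadius_eq_zero [CompleteSpace E]
    {S : E →L[𝕜] E} (hS : spectralRadius 𝕜 S = 0) {l : 𝕜} (hl : l ≠ 0) :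
    IsBoundedBelow (S - l • 1) :=
  isBoundedBelow_sub_smul_one_of_mem_resolventSet <|
    spectrum.mem_resolventSet_of_spectralRadius_lt (a := S) (k := l) (by simpa [hS] using hl)

end BoundedBelow

namespace Submodule

variable {𝕜 E : Type*} [NontriviallyNormedField 𝕜] [NormedAddCommGroup E] [NormedSpace 𝕜 E]
  {M N : Submodule 𝕜 E} (h : M.IsTopCompl N) {A : E →L[𝕜] E}

theorem projectionL_apply_comm_of_invariant (hM : ∀ x ∈ M, A x ∈ M) (hN : ∀ x ∈ N, A x ∈ N)
    (x : E) :
    M.projectionL N h (A x) = A (M.projectionL N h x) := by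
  conv_lhs => rw [← M.projectionL_add_projectionL_eq_self h x, map_add, map_add]
  rw [M.projectionL_apply_left h ⟨_, hM _ (M.projectionL_apply_mem h x)⟩,
    (M.projectionL_apply_eq_zero_iff h).mpr (hN _ (N.projectionL_apply_mem h.symm x)), add_zero]

theorem norm_projectionL_apply_le (hM : ∀ x ∈ M, A x ∈ M) (hN : ∀ x ∈ N, A x ∈ N)
    {K : ℝ} (hK : 0 ≤ K) (hAM : ∀ x ∈ M, ‖x‖ ≤ K * ‖A x‖) (x : E) :
    ‖M.projectionL N h x‖ ≤ K * ‖M.projectionL N h‖ * ‖A x‖ :=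
  calc ‖M.projectionL N h x‖ ≤ K * ‖A (M.projectionL N h x)‖ :=
        hAM _ (M.projectionL_apply_mem h x)
    _ = K * ‖M.projectionL N h (A x)‖ := by rw [M.projectionL_apply_comm_of_invariant h hM hN]
    _ ≤ K * (‖M.projectionL N h‖ * ‖A x‖) := by gcongr; exact ContinuousLinearMap.le_opNorm _ _
    _ = K * ‖M.projectionL N h‖ * ‖A x‖ := by ring

end Submodule

theorem isBoundedBelow_of_isTopCompl {X : Type*} [NormedAddCommGroup X] [NormedSpace ℂ X]
    {A : X →L[ℂ] X} {M N : Submodule ℂ X} (h : M.IsTopCompl N) (hM : ∀ x ∈ M, A x ∈ M)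
    (hN : ∀ x ∈ N, A x ∈ N) (hAM : IsBoundedBelow (clmRestrict A M hM))
    (hAN : IsBoundedBelow (clmRestrict A N hN)) : IsBoundedBelow A := by
  obtain ⟨KM, hKM, hAM⟩ := isBoundedBelow_iff_exists_norm_le_mul.mp hAM
  obtain ⟨KN, hKN, hAN⟩ := isBoundedBelow_iff_exists_norm_le_mul.mp hAN
  refine isBoundedBelow_iff_exists_norm_le_mul.mpr
    ⟨KM * ‖M.projectionL N h‖ + KN * ‖N.projectionL M h.symm‖, by positivity, fun x => ?_⟩
  calc ‖x‖ = ‖M.projectionL N h x + N.projectionL M h.symm x‖ := by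
        rw [M.projectionL_add_projectionL_eq_self h]
    _ ≤ ‖M.projectionL N h x‖ + ‖N.projectionL M h.symm x‖ := norm_add_le _ _
    _ ≤ KM * ‖M.projectionL N h‖ * ‖A x‖ + KN * ‖N.projectionL M h.symm‖ * ‖A x‖ :=
        add_le_add (M.norm_projectionL_apply_le h hM hN hKM (fun x hx => hAM ⟨x, hx⟩) x)
          (N.norm_projectionL_apply_le h.symm hN hM hKN (fun x hx => hAN ⟨x, hx⟩) x)
    _ = (KM * ‖M.projectionL N h‖ + KN * ‖N.projectionL M h.symm‖) * ‖A x‖ := by ring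

theorem clmRestrict_sub_smul_one {X : Type*} [NormedAddCommGroup X] [NormedSpace ℂ X]
    (T : X →L[ℂ] X) (M : Submodule ℂ X) (hM : ∀ x ∈ M, T x ∈ M) (l : ℂ) :
    clmRestrict (T - l • 1) M (fun x hx => M.sub_mem (hM x hx) (M.smul_mem l hx)) =
      clmRestrict T M hM - l • 1 :=
  rfl

/-- If T = T_M ⊕ T_N with T_M bounded below and T_N quasinilpotent, then T - λ
is bounded below for all small nonzero λ. -/
theorem stmt_8 {X : Type*} [NormedAddCommGroup X] [NormedSpace ℂ X] [CompleteSpace X]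
    (T : X →L[ℂ] X) (M N : Submodule ℂ X)
    (hMc : IsClosed (M : Set X)) (hNc : IsClosed (N : Set X))
    (hM : ∀ x ∈ M, T x ∈ M) (hN : ∀ x ∈ N, T x ∈ N)
    (hcompl : IsCompl M N)
    (hbb : ∃ c > (0 : ℝ), ∀ x : M, c * ‖x‖ ≤ ‖clmRestrict T M hM x‖)
    (hq : spectralRadius ℂ (clmRestrict T N hN) = 0) :
    ∃ ε > (0 : ℝ), ∀ l : ℂ, 0 < ‖l‖ → ‖l‖ < ε →
      ∃ c > (0 : ℝ), ∀ x : X, c * ‖x‖ ≤ ‖(T - l • (1 : X →L[ℂ] X)) x‖ := by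
  have : CompleteSpace N := hNc.completeSpace_coe
  obtain ⟨c, hc, hTM⟩ := hbb
  refine ⟨c, hc, fun l hl0 hlc => isBoundedBelow_of_isTopCompl
    (Submodule.IsCompl.isTopCompl_of_isClosed hcompl hMc hNc)
    (fun x hx => M.sub_mem (hM x hx) (M.smul_mem l hx))
    (fun x hx => N.sub_mem (hN x hx) (N.smul_mem l hx)) ?_ ?_⟩
  · rw [clmRestrict_sub_smul_one T M hM]
    exact isBoundedBelow_sub_smul_one_of_norm_lt hTM hlc
  · rw [clmRestrict_sub_smul_one T N hN]
    exact isBoundedBelow_sub_smul_one_of_spectralRadius_eq_zero hq (norm_pos_iff.mp hl0)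
end

section
/- Let X be a complex Banach space and T a bounded linear operator such that X = M ⊕ N for closed T-invariant subspaces with T_M surjective and T_N quasinilpotent. Then there exists ε > 0 such that T − λ is surjective for all complex λ with 0 < |λ| < ε; i.e., 0 is not an accumulation point of the surjective spectrum of T. -/
/-!
On `M`, `T - λ` is a small perturbation of the surjective `T_M`, and surjectivity of operators
between Banach spaces is an open condition. On `N`, every `λ ≠ 0` lies outside the spectrum of the
quasinilpotent `T_N`, so `T_N - λ` is invertible. Hence the range of `T - λ` contains `M` and `N`,
so it is all of `X = M ⊕ N`.
-/

open Filter Topology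

open Function Set

namespace ContinuousLinearMap

variable {𝕜 E F : Type*} [NontriviallyNormedField 𝕜]
  [NormedAddCommGroup E] [NormedSpace 𝕜 E] [NormedAddCommGroup F] [NormedSpace 𝕜 F]

/-- By the open mapping theorem `f` has a bounded nonlinear right inverse, so every `g` close to
`f` has open range; an open submodule is the whole space. -/
theorem exists_forall_surjective_of_norm_sub_lt [CompleteSpace E] [CompleteSpace F]
    (f : E →L[𝕜] F) (hf : Surjective f) :
    ∃ ε > (0 : ℝ), ∀ g : E →L[𝕜] F, ‖g - f‖ < ε → Surjective g := by
  obtain ⟨fsymm, hpos⟩ :=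
    f.exists_nonlinearRightInverse_of_surjective (LinearMap.range_eq_top.2 hf)
  refine ⟨(fsymm.nnnorm : ℝ)⁻¹, by positivity, fun g hg => ?_⟩
  have happrox : ApproximatesLinearOn g f univ ‖g - f‖₊ := fun x _ z _ => by
    have : g x - g z - f (x - z) = (g - f) (x - z) := by simp only [sub_apply, map_sub]; abel
    rw [this]
    exact (g - f).le_opNorm _
  have hopen : IsOpen (range g) := by
    simpa [image_univ] using happrox.open_image fsymm isOpen_univ (.inr hg)
  refine LinearMap.range_eq_top.1 <|
    Submodule.eq_top_of_nonempty_interior' (LinearMap.range (g : E →ₗ[𝕜] F)) ⟨0, ?_⟩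
  rw [LinearMap.coe_range, coe_coe, hopen.interior_eq]
  exact ⟨0, map_zero g⟩

theorem surjective_sub_smul_one_of_spectralRadius_eq_zero {a : E →L[𝕜] E}
    (ha : spectralRadius 𝕜 a = 0) {l : 𝕜} (hl : l ≠ 0) :
    Surjective (a - l • (1 : E →L[𝕜] E)) := by
  have hres : l ∈ resolventSet 𝕜 a :=
    spectrum.mem_resolventSet_of_spectralRadius_lt (by simpa [ha] using hl)
  obtain ⟨b, hb⟩ := (spectrum.mem_resolventSet_iff.1 hres).neg.exists_right_inv
  rw [neg_sub, Algebra.algebraMap_eq_smul_one] at hb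
  exact fun y => ⟨b y, by simpa using congr($hb y)⟩

end ContinuousLinearMap

theorem le_range_of_surjective_clmRestrict_sub_smul_one {X : Type*} [NormedAddCommGroup X]
    [NormedSpace ℂ X] {T : X →L[ℂ] X} {M : Submodule ℂ X} (hM : ∀ x ∈ M, T x ∈ M) {l : ℂ}
    (h : Surjective (clmRestrict T M hM - l • (1 : M →L[ℂ] M))) :
    M ≤ LinearMap.range ((T - l • 1 : X →L[ℂ] X) : X →ₗ[ℂ] X) := fun m hm => by
  obtain ⟨x, hx⟩ := h ⟨m, hm⟩
  exact ⟨x, congrArg Subtype.val hx⟩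

theorem stmt_9_general {X : Type*} [NormedAddCommGroup X] [NormedSpace ℂ X] [CompleteSpace X]
    (T : X →L[ℂ] X) (M N : Submodule ℂ X)
    (hMc : IsClosed (M : Set X))
    (hM : ∀ x ∈ M, T x ∈ M) (hN : ∀ x ∈ N, T x ∈ N)
    (hcompl : IsCompl M N)
    (hsurj : Function.Surjective (clmRestrict T M hM))
    (hq : spectralRadius ℂ (clmRestrict T N hN) = 0) :
    ∃ ε > (0 : ℝ), ∀ l : ℂ, 0 < ‖l‖ → ‖l‖ < ε →
      Function.Surjective (T - l • (1 : X →L[ℂ] X)) := by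
  have : CompleteSpace M := hMc.completeSpace_coe
  obtain ⟨ε, hε, hpert⟩ := (clmRestrict T M hM).exists_forall_surjective_of_norm_sub_lt hsurj
  refine ⟨ε, hε, fun l hl0 hlε => ?_⟩
  have hMl := le_range_of_surjective_clmRestrict_sub_smul_one hM <| hpert _ <| by
    calc ‖clmRestrict T M hM - l • 1 - clmRestrict T M hM‖ = ‖l • (1 : M →L[ℂ] M)‖ := by
          rw [sub_sub_cancel_left (clmRestrict T M hM), norm_neg (l • (1 : M →L[ℂ] M))]
      _ ≤ ‖l‖ := ContinuousLinearMap.opNorm_le_bound _ (norm_nonneg l) fun x => by simp [norm_smul]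
      _ < ε := hlε
  have hNl := le_range_of_surjective_clmRestrict_sub_smul_one hN <|
    ContinuousLinearMap.surjective_sub_smul_one_of_spectralRadius_eq_zero hq (norm_pos_iff.1 hl0)
  exact LinearMap.range_eq_top.1 <| top_le_iff.1 <| hcompl.sup_eq_top ▸ sup_le hMl hNl

/-- If T = T_M ⊕ T_N with T_M surjective and T_N quasinilpotent, then T - λ is
surjective for all small nonzero λ. -/
theorem stmt_9 {X : Type*} [NormedAddCommGroup X] [NormedSpace ℂ X] [CompleteSpace X]
    (T : X →L[ℂ] X) (M N : Submodule ℂ X)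
    (hMc : IsClosed (M : Set X)) (hNc : IsClosed (N : Set X))
    (hM : ∀ x ∈ M, T x ∈ M) (hN : ∀ x ∈ N, T x ∈ N)
    (hcompl : IsCompl M N)
    (hsurj : Function.Surjective (clmRestrict T M hM))
    (hq : spectralRadius ℂ (clmRestrict T N hN) = 0) :
    ∃ ε > (0 : ℝ), ∀ l : ℂ, 0 < ‖l‖ → ‖l‖ < ε →
      Function.Surjective (T - l • (1 : X →L[ℂ] X)) :=
  stmt_9_general T M N hMc hM hN hcompl hsurj hq
end

section
/- Let X be a complex Banach space and T a bounded linear operator. Suppose the quasinilpotent part H₀(T) is closed and there is a closed subspace M with X = M ⊕ H₀(T), T(M) ⊆ M, and T(M) closed. Then the restriction of T to M is bounded below and the restriction of T to H₀(T) is quasinilpotent. -/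
open Filter Topology

/-- The quasinilpotent part of an operator. -/
def H0 {X : Type*} [NormedAddCommGroup X] [NormedSpace ℂ X] (T : X →L[ℂ] X) : Set X :=
  {x : X | Tendsto (fun n : ℕ => ‖(T ^ n) x‖ ^ (1 / (n : ℝ))) atTop (nhds 0)}

/-!
On `M`, `T` is injective because `ker T ⊆ H₀(T)` and `M ∩ H₀(T) = 0`; an injective operator with
closed range between Banach spaces is bounded below by the open mapping theorem.
On the Banach space `H₀(T)` every orbit satisfies `‖Tⁿx‖^{1/n} → 0`, i.e. `‖Tⁿx‖ ≤ C_x εⁿ` for each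
`ε > 0`. Banach–Steinhaus makes `C_x` uniform, so `‖Tⁿ‖^{1/n} → 0` and Gelfand's formula gives
spectral radius `0`.
-/

theorem tendsto_rpow_one_div_nhds_zero_iff {a : ℕ → ℝ} (ha : ∀ n, 0 ≤ a n) :
    Tendsto (fun n : ℕ => a n ^ (1 / (n : ℝ))) atTop (𝓝 0) ↔
      ∀ ε > 0, ∃ C, ∀ n, a n ≤ C * ε ^ n := by
  constructor
  · intro h ε hε
    have hle : ∀ᶠ n : ℕ in atTop, a n / ε ^ n ≤ 1 := by
      filter_upwards [h.eventually_le_const hε, eventually_gt_atTop 0] with n hn hn0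
      rw [one_div, Real.rpow_inv_le_iff_of_pos (ha n) hε.le (by positivity),
        Real.rpow_natCast] at hn
      rwa [div_le_one (by positivity)]
    obtain ⟨C, hC⟩ := (isBoundedUnder_of_eventually_le hle).bddAbove_range
    exact ⟨C, fun n => (div_le_iff₀ (by positivity)).1 (hC ⟨n, rfl⟩)⟩
  · intro h
    refine tendsto_order.2
      ⟨fun d hd => .of_forall fun n => hd.trans_le (Real.rpow_nonneg (ha n) _), fun δ hδ => ?_⟩
    obtain ⟨C, hC⟩ := h (δ / 2) (by positivity)
    have hC' : 0 < max C 1 := by positivity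
    have hroot : Tendsto (fun n : ℕ => max C 1 ^ (1 / (n : ℝ))) atTop (𝓝 1) := by
      simpa [Function.comp_def] using ((Real.continuousAt_const_rpow hC'.ne').tendsto.comp
        tendsto_one_div_atTop_nhds_zero_nat)
    filter_upwards [hroot.eventually_lt_const one_lt_two, eventually_gt_atTop 0]
      with n hn hn0
    calc a n ^ (1 / (n : ℝ)) ≤ (max C 1 * (δ / 2) ^ n) ^ (1 / (n : ℝ)) := by
          gcongr
          · exact ha n
          · exact (hC n).trans (by gcongr; exact le_max_left _ _)
      _ = max C 1 ^ (1 / (n : ℝ)) * (δ / 2) := by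
          rw [Real.mul_rpow hC'.le (by positivity), one_div,
            Real.pow_rpow_inv_natCast (by positivity) hn0.ne']
      _ < 2 * (δ / 2) := by gcongr
      _ = δ := by ring

theorem spectralRadius_eq_zero_of_H0_eq_univ {E : Type*} [NormedAddCommGroup E]
    [NormedSpace ℂ E] [CompleteSpace E] (S : E →L[ℂ] E) (hS : H0 S = Set.univ) :
    spectralRadius ℂ S = 0 := by
  have hnorm : Tendsto (fun n : ℕ => ‖S ^ n‖ ^ (1 / (n : ℝ))) atTop (𝓝 0) := by
    refine (tendsto_rpow_one_div_nhds_zero_iff fun n => norm_nonneg _).2 fun ε hε => ?_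
    have hscale (n : ℕ) : ‖((ε : ℂ) ^ n)⁻¹‖ = (ε ^ n)⁻¹ := by
      rw [norm_inv, norm_pow, Complex.norm_real, Real.norm_of_nonneg hε.le]
    obtain ⟨C, hC⟩ := banach_steinhaus (g := fun n : ℕ => ((ε : ℂ) ^ n)⁻¹ • S ^ n) fun x => by
      have hx : x ∈ H0 S := hS ▸ Set.mem_univ x
      obtain ⟨C, hC⟩ := (tendsto_rpow_one_div_nhds_zero_iff fun n => norm_nonneg _).1 hx ε hε
      refine ⟨C, fun n => ?_⟩
      rw [smul_apply, norm_smul, hscale, inv_mul_le_iff₀ (by positivity), mul_comm]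
      exact hC n
    refine ⟨C, fun n => ?_⟩
    have := hC n
    rwa [norm_smul, hscale, inv_mul_le_iff₀ (by positivity), mul_comm] at this
  exact tendsto_nhds_unique (spectrum.pow_norm_pow_one_div_tendsto_nhds_spectralRadius S)
    (by simpa using ENNReal.tendsto_ofReal hnorm)

theorem exists_pos_mul_norm_le_of_injective_of_isClosed_range {𝕜 E F : Type*}
    [NontriviallyNormedField 𝕜] [NormedAddCommGroup E] [NormedSpace 𝕜 E] [CompleteSpace E]
    [NormedAddCommGroup F] [NormedSpace 𝕜 F] [CompleteSpace F] (f : E →L[𝕜] F)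
    (hf : Function.Injective f) (hf' : IsClosed (Set.range f)) :
    ∃ c > (0 : ℝ), ∀ x, c * ‖x‖ ≤ ‖f x‖ := by
  obtain ⟨K, hK⟩ := f.antilipschitz_of_injective_of_isClosed_range hf hf'
  refine ⟨((K : ℝ) + 1)⁻¹, by positivity, fun x => ?_⟩
  rw [inv_mul_le_iff₀ (by positivity)]
  exact (f.bound_of_antilipschitz hK x).trans (by gcongr; linarith)

section QuasinilpotentPart

variable {X : Type*} [NormedAddCommGroup X] [NormedSpace ℂ X]

theorem mem_H0_of_apply_eq_zero (T : X →L[ℂ] X) {x : X} (hx : T x = 0) : x ∈ H0 T := by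
  refine tendsto_const_nhds.congr' ?_
  filter_upwards [eventually_gt_atTop 0] with n hn
  obtain ⟨m, rfl⟩ := Nat.exists_eq_add_of_lt hn
  rw [pow_succ, mul_apply_eq_comp, hx, map_zero, norm_zero, Real.zero_rpow (by positivity)]

theorem coe_clmRestrict_pow_apply (T : X →L[ℂ] X) (N : Submodule ℂ X) (hN : ∀ x ∈ N, T x ∈ N)
    (n : ℕ) (x : N) : (((clmRestrict T N hN) ^ n) x : X) = (T ^ n) x := by
  induction n generalizing x with
  | zero => rfl
  | succ n ih =>
    rw [pow_succ, pow_succ, mul_apply_eq_comp, mul_apply_eq_comp, ih]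
    rfl

theorem mem_H0_clmRestrict_iff (T : X →L[ℂ] X) (N : Submodule ℂ X) (hN : ∀ x ∈ N, T x ∈ N)
    (x : N) : x ∈ H0 (clmRestrict T N hN) ↔ (x : X) ∈ H0 T := by
  simp only [H0, Set.mem_ofPred_eq, ← coe_clmRestrict_pow_apply T N hN, Submodule.coe_norm]

theorem range_clmRestrict (T : X →L[ℂ] X) (M : Submodule ℂ X) (hM : ∀ x ∈ M, T x ∈ M) :
    Set.range (clmRestrict T M hM) = (↑) ⁻¹' (T '' M) := by
  ext y
  constructor
  · rintro ⟨x, rfl⟩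
    exact ⟨x, x.2, rfl⟩
  · rintro ⟨x, hx, hy⟩
    exact ⟨⟨x, hx⟩, Subtype.ext hy⟩

end QuasinilpotentPart

/-- If H₀(T) is closed and complemented by a closed T-invariant M with T(M)
closed, then T_M is bounded below and the restriction to H₀(T) is quasinilpotent. -/
theorem stmt_10 {X : Type*} [NormedAddCommGroup X] [NormedSpace ℂ X] [CompleteSpace X]
    (T : X →L[ℂ] X) (M N₀ : Submodule ℂ X)
    (hN0 : (N₀ : Set X) = H0 T) (hN0c : IsClosed (N₀ : Set X))
    (hMc : IsClosed (M : Set X))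
    (hM : ∀ x ∈ M, T x ∈ M) (hN : ∀ x ∈ N₀, T x ∈ N₀)
    (hcompl : IsCompl M N₀)
    (hTM : IsClosed (T '' (M : Set X))) :
    (∃ c > (0 : ℝ), ∀ x : M, c * ‖x‖ ≤ ‖clmRestrict T M hM x‖) ∧
      spectralRadius ℂ (clmRestrict T N₀ hN) = 0 := by
  constructor
  · have : CompleteSpace M := hMc.completeSpace_coe
    refine exists_pos_mul_norm_le_of_injective_of_isClosed_range _ ?_ ?_
    · refine (injective_iff_map_eq_zero _).2 fun x hx => Subtype.ext ?_
      have hxH : (x : X) ∈ H0 T := mem_H0_of_apply_eq_zero T (congrArg Subtype.val hx)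
      exact Submodule.disjoint_def.mp hcompl.disjoint x x.2 (by rwa [← SetLike.mem_coe, hN0])
    · rw [range_clmRestrict]
      exact hTM.preimage continuous_subtype_val
  · have : CompleteSpace N₀ := hN0c.completeSpace_coe
    refine spectralRadius_eq_zero_of_H0_eq_univ _ (Set.eq_univ_of_forall fun x => ?_)
    rw [mem_H0_clmRestrict_iff, ← hN0]
    exact x.2
end

section
/- Let X be a complex Banach space and T a bounded linear operator. If there exist closed T-invariant subspaces M, N with X = M ⊕ N, T_M surjective, and T_N quasinilpotent, then M = K(T), the analytical core of T; in particular K(T) is closed. -/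
open Filter Topology

/-- The analytical core of an operator. -/
def Kcore {X : Type*} [NormedAddCommGroup X] [NormedSpace ℂ X] (T : X →L[ℂ] X) : Set X :=
  {x : X | ∃ c > (0 : ℝ), ∃ u : ℕ → X, u 0 = x ∧ (∀ n : ℕ, T (u (n + 1)) = u n) ∧
    ∀ n : ℕ, ‖u n‖ ≤ c ^ n * ‖x‖}

/-! Surjectivity of `T` on `M` and the open mapping theorem give every `x ∈ M` a backward
orbit `T uₙ₊₁ = uₙ` with `‖uₙ‖ ≤ Cⁿ ‖x‖`, so `M ⊆ K(T)`. Conversely, the projection `P` onto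
`N` along `M` commutes with `T`, so it carries a backward orbit of `x ∈ K(T)` to a backward
orbit `vₙ` of `T_N` of geometric growth. As `T_N` is quasinilpotent, Gelfand's formula gives
`‖T_Nⁿ‖ ≤ (2c)⁻ⁿ` eventually, hence `‖P x‖ = ‖T_Nⁿ vₙ‖ ≤ 2⁻ⁿ ‖P‖ ‖x‖ → 0` and
`x ∈ ker P = M`. -/

theorem Submodule.commute_projection_of_invariant {R E : Type*} [Ring R] [AddCommGroup E]
    [Module R E] {p q : Submodule R E} (h : IsCompl p q) {T : E →ₗ[R] E}
    (hp : ∀ x ∈ p, T x ∈ p) (hq : ∀ x ∈ q, T x ∈ q) :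
    Commute (p.projection q h) T := by
  refine (LinearMap.IsIdempotentElem.commute_iff (isIdempotentElem_projection h)).mpr ⟨?_, ?_⟩
  · rw [range_projection, Module.End.mem_invtSubmodule]
    exact hp
  · rw [ker_projection, Module.End.mem_invtSubmodule]
    exact hq

theorem ContinuousLinearMap.exists_backward_orbit_norm_le_of_surjective
    {𝕜 E : Type*} [NontriviallyNormedField 𝕜] [NormedAddCommGroup E] [NormedSpace 𝕜 E]
    [CompleteSpace E] {S : E →L[𝕜] E} (hS : Function.Surjective S) :
    ∃ C > 0, ∀ x, ∃ u : ℕ → E, u 0 = x ∧ (∀ n, S (u (n + 1)) = u n) ∧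
      ∀ n, ‖u n‖ ≤ C ^ n * ‖x‖ := by
  obtain ⟨C, hC, hpre⟩ := S.exists_preimage_norm_le hS
  choose g hSg hg using hpre
  refine ⟨C, hC, fun x => ⟨fun n => g^[n] x, rfl, fun n => ?_, fun n => ?_⟩⟩
  · simp only [Function.iterate_succ_apply', hSg]
  · induction n with
    | zero => simp
    | succ n ih =>
      calc ‖g^[n + 1] x‖ ≤ C * ‖g^[n] x‖ := by
            rw [Function.iterate_succ_apply']; exact hg _
        _ ≤ C * (C ^ n * ‖x‖) := by gcongr
        _ = C ^ (n + 1) * ‖x‖ := by ring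

theorem spectrum.eventually_norm_pow_le_of_spectralRadius_eq_zero {A : Type*} [NormedRing A]
    [NormedAlgebra ℂ A] [CompleteSpace A] {a : A} (ha : spectralRadius ℂ a = 0)
    {ε : ℝ} (hε : 0 < ε) : ∀ᶠ n : ℕ in atTop, ‖a ^ n‖ ≤ ε ^ n := by
  have hgelfand := pow_norm_pow_one_div_tendsto_nhds_spectralRadius a
  rw [ha] at hgelfand
  filter_upwards [hgelfand.eventually_lt_const (ENNReal.ofReal_pos.mpr hε),
    eventually_ne_atTop 0] with n hn hn0
  rw [ENNReal.ofReal_lt_ofReal_iff hε, one_div] at hn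
  calc ‖a ^ n‖ = (‖a ^ n‖ ^ ((n : ℝ)⁻¹)) ^ n :=
        (Real.rpow_inv_natCast_pow (norm_nonneg _) hn0).symm
    _ ≤ ε ^ n := by gcongr

theorem eq_zero_of_backward_orbit_of_spectralRadius_eq_zero {E : Type*} [NormedAddCommGroup E]
    [NormedSpace ℂ E] [CompleteSpace E] {S : E →L[ℂ] E} (hS : spectralRadius ℂ S = 0)
    {v : ℕ → E} (hv : ∀ n, S (v (n + 1)) = v n) {K c : ℝ} (hc : 0 < c)
    (hbound : ∀ n, ‖v n‖ ≤ c ^ n * K) : v 0 = 0 := by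
  have hpow : ∀ n, (S ^ n) (v n) = v 0 := by
    intro n
    induction n with
    | zero => rfl
    | succ n ih => rw [pow_succ, mul_apply_eq_comp, hv, ih]
  have hbound' : ∀ᶠ n : ℕ in atTop, ‖v 0‖ ≤ (1 / 2) ^ n * K := by
    filter_upwards [spectrum.eventually_norm_pow_le_of_spectralRadius_eq_zero hS
      (by positivity : 0 < (2 * c)⁻¹)] with n hn
    calc ‖v 0‖ = ‖(S ^ n) (v n)‖ := by rw [hpow]
      _ ≤ ‖S ^ n‖ * ‖v n‖ := (S ^ n).le_opNorm _
      _ ≤ (2 * c)⁻¹ ^ n * (c ^ n * K) := by gcongr; exact hbound n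
      _ = (1 / 2) ^ n * K := by
        rw [← mul_assoc, ← mul_pow, show (2 * c)⁻¹ * c = 1 / 2 by field_simp]
  have hlim : Tendsto (fun n : ℕ => (1 / 2 : ℝ) ^ n * K) atTop (𝓝 0) := by
    simpa using (tendsto_pow_atTop_nhds_zero_of_lt_one (by norm_num : (0 : ℝ) ≤ 1 / 2)
      (by norm_num)).mul_const K
  exact norm_le_zero_iff.mp (ge_of_tendsto hlim hbound')

theorem subset_Kcore_of_surjective_clmRestrict {X : Type*} [NormedAddCommGroup X]
    [NormedSpace ℂ X] [CompleteSpace X] {T : X →L[ℂ] X} {M : Submodule ℂ X}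
    (hMc : IsClosed (M : Set X)) {hM : ∀ x ∈ M, T x ∈ M}
    (hsurj : Function.Surjective (clmRestrict T M hM)) : (M : Set X) ⊆ Kcore T := by
  have := hMc.completeSpace_coe
  obtain ⟨C, hC, horbit⟩ := ContinuousLinearMap.exists_backward_orbit_norm_le_of_surjective hsurj
  intro x hx
  obtain ⟨u, hu0, hTu, hu⟩ := horbit ⟨x, hx⟩
  exact ⟨C, hC, fun n => u n, congrArg Subtype.val hu0,
    fun n => congrArg Subtype.val (hTu n), hu⟩

theorem Kcore_subset_of_isCompl_of_spectralRadius_eq_zero {X : Type*} [NormedAddCommGroup X]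
    [NormedSpace ℂ X] [CompleteSpace X] {T : X →L[ℂ] X} {M N : Submodule ℂ X}
    (hMc : IsClosed (M : Set X)) (hNc : IsClosed (N : Set X))
    (hM : ∀ x ∈ M, T x ∈ M) {hN : ∀ x ∈ N, T x ∈ N} (hcompl : IsCompl M N)
    (hq : spectralRadius ℂ (clmRestrict T N hN) = 0) : Kcore T ⊆ M := by
  have := hNc.completeSpace_coe
  have htop : N.IsTopCompl M := Submodule.IsCompl.isTopCompl_of_isClosed hcompl.symm hNc hMc
  set P := N.projectionOntoL M htop
  have hPT : ∀ z, (P (T z) : X) = T (P z) := fun z => by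
    have := LinearMap.congr_fun
      (Submodule.commute_projection_of_invariant htop.isCompl hN hM).eq z
    simp only [Module.End.mul_apply, Submodule.projection_apply] at this
    exact this
  rintro x ⟨c, hc, u, rfl, hTu, hu⟩
  have hv : ∀ n, clmRestrict T N hN (P (u (n + 1))) = P (u n) :=
    fun n => Subtype.ext (by rw [← hTu n, hPT]; rfl)
  have hbound : ∀ n, ‖P (u n)‖ ≤ c ^ n * (‖P‖ * ‖u 0‖) := fun n =>
    calc ‖P (u n)‖ ≤ ‖P‖ * ‖u n‖ := P.le_opNorm _
      _ ≤ ‖P‖ * (c ^ n * ‖u 0‖) := by gcongr; exact hu n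
      _ = c ^ n * (‖P‖ * ‖u 0‖) := by ring
  exact (Submodule.projectionOntoL_apply_eq_zero_iff htop).mp
    (eq_zero_of_backward_orbit_of_spectralRadius_eq_zero hq hv hc hbound)

/-- If T = T_M ⊕ T_N with T_M surjective and T_N quasinilpotent, then
M = K(T); in particular K(T) is closed. -/
theorem stmt_12 {X : Type*} [NormedAddCommGroup X] [NormedSpace ℂ X] [CompleteSpace X]
    (T : X →L[ℂ] X) (M N : Submodule ℂ X)
    (hMc : IsClosed (M : Set X)) (hNc : IsClosed (N : Set X))
    (hM : ∀ x ∈ M, T x ∈ M) (hN : ∀ x ∈ N, T x ∈ N)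
    (hcompl : IsCompl M N)
    (hsurj : Function.Surjective (clmRestrict T M hM))
    (hq : spectralRadius ℂ (clmRestrict T N hN) = 0) :
    (M : Set X) = Kcore T ∧ IsClosed (Kcore T) := by
  have hMK : (M : Set X) = Kcore T :=
    (subset_Kcore_of_surjective_clmRestrict hMc hsurj).antisymm
      (Kcore_subset_of_isCompl_of_spectralRadius_eq_zero hMc hNc hM hcompl hq)
  exact ⟨hMK, hMK ▸ hMc⟩
end

section
/- Let X be a complex Banach space and T a bounded linear operator. Suppose K(T) is closed and there exists a closed T-invariant subspace N with N ⊆ H₀(T) and X = K(T) ⊕ N. Then the restriction of T to K(T) is surjective and the restriction of T to N is quasinilpotent. -/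
open Filter Topology

/-! If `T y₁ = y` with `‖yₙ‖ ≤ cⁿ‖y‖` along a backward orbit of `y`, the shifted orbit of `y₁`
satisfies a bound of the same geometric type, so `y₁ ∈ K(T)` and `T` maps `K(T)` onto itself.
On `N` every orbit `‖Tⁿx‖` decays faster than any geometric sequence; by Banach–Steinhaus this
becomes `‖(T|_N)ⁿ‖ ≤ C rⁿ` for every `r > 0`, and since `λⁿ ∈ σ(Tⁿ)` no `λ ≠ 0` lies in the
spectrum. -/

lemma eventually_le_pow_of_tendsto_rpow_one_div_zero {u : ℕ → ℝ} (hu : ∀ n, 0 ≤ u n)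
    (h : Tendsto (fun n : ℕ => u n ^ (1 / (n : ℝ))) atTop (𝓝 0)) {r : ℝ} (hr : 0 < r) :
    ∀ᶠ n in atTop, u n ≤ r ^ n := by
  filter_upwards [h.eventually_le_const hr, eventually_ne_atTop 0] with n hn hn0
  calc u n = (u n ^ (1 / (n : ℝ))) ^ n := by
        rw [one_div, Real.rpow_inv_natCast_pow (hu n) hn0]
    _ ≤ r ^ n := by gcongr; exact Real.rpow_nonneg (hu n) _

section PowerGrowth

variable {𝕜 : Type*} [NontriviallyNormedField 𝕜]

lemma ContinuousLinearMap.exists_norm_pow_le_mul_pow {E : Type*} [NormedAddCommGroup E]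
    [NormedSpace 𝕜 E] [CompleteSpace E] (S : E →L[𝕜] E) {c : 𝕜} (hc : c ≠ 0)
    (h : ∀ x, ∀ᶠ n in atTop, ‖(S ^ n) x‖ ≤ ‖c‖ ^ n) :
    ∃ C, ∀ n, ‖S ^ n‖ ≤ C * ‖c‖ ^ n := by
  obtain ⟨C, hC⟩ := banach_steinhaus (g := fun n : ℕ => (c ^ n)⁻¹ • S ^ n) fun x => by
    have hev : ∀ᶠ n in atTop, ‖((c ^ n)⁻¹ • S ^ n) x‖ ≤ 1 := by
      filter_upwards [h x] with n hn
      rwa [smul_apply, norm_smul, norm_inv, norm_pow, inv_mul_le_one₀ (by positivity)]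
    obtain ⟨C, hC⟩ := (isBoundedUnder_of_eventually_le hev).bddAbove_range
    exact ⟨C, fun n => hC ⟨n, rfl⟩⟩
  refine ⟨C, fun n => ?_⟩
  have hn := hC n
  rw [norm_smul, norm_inv, norm_pow, inv_mul_le_iff₀ (by positivity)] at hn
  linarith

lemma spectralRadius_eq_zero_of_norm_pow_le {A : Type*} [NormedRing A] [NormedAlgebra 𝕜 A]
    [CompleteSpace A] (a : A) (h : ∀ c : 𝕜, c ≠ 0 → ∃ C, ∀ n, ‖a ^ n‖ ≤ C * ‖c‖ ^ n) :
    spectralRadius 𝕜 a = 0 := by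
  suffices hσ : ∀ k ∈ spectrum 𝕜 a, k = 0 by
    refine le_antisymm (iSup₂_le fun k hk => ?_) zero_le
    simp [hσ k hk]
  intro k hk
  by_contra hk0
  obtain ⟨c, hc0, hck⟩ := NormedField.exists_norm_lt 𝕜 (norm_pos_iff.2 hk0)
  obtain ⟨C, hC⟩ := h c (norm_pos_iff.1 hc0)
  -- `‖k‖ ^ n ≤ ‖a ^ n‖ ‖1‖ ≤ C ‖1‖ ‖c‖ ^ n` with `‖c‖ < ‖k‖` is impossible for large `n`
  have hbdd : ∀ n : ℕ, (‖k‖ / ‖c‖) ^ n ≤ C * ‖(1 : A)‖ := fun n => by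
    have hmem := spectrum.norm_le_norm_mul_of_mem (spectrum.pow_mem_pow a n hk)
    rw [norm_pow] at hmem
    rw [div_pow, div_le_iff₀ (by positivity)]
    nlinarith [hC n, norm_nonneg (1 : A)]
  obtain ⟨n, hn⟩ := (tendsto_pow_atTop_atTop_of_one_lt ((one_lt_div hc0).2 hck)
    |>.eventually_gt_atTop (C * ‖(1 : A)‖)).exists
  exact (hbdd n).not_gt hn

lemma spectralRadius_eq_zero_of_tendsto_norm_pow_apply {E : Type*} [NormedAddCommGroup E]
    [NormedSpace 𝕜 E] [CompleteSpace E] (S : E →L[𝕜] E)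
    (h : ∀ x, Tendsto (fun n : ℕ => ‖(S ^ n) x‖ ^ (1 / (n : ℝ))) atTop (𝓝 0)) :
    spectralRadius 𝕜 S = 0 :=
  spectralRadius_eq_zero_of_norm_pow_le S fun _ hc =>
    S.exists_norm_pow_le_mul_pow hc fun x =>
      eventually_le_pow_of_tendsto_rpow_one_div_zero (fun _ => norm_nonneg _) (h x)
        (norm_pos_iff.2 hc)

end PowerGrowth

section Restriction

variable {X : Type*} [NormedAddCommGroup X] [NormedSpace ℂ X] (T : X →L[ℂ] X)
  (M : Submodule ℂ X) (hM : ∀ x ∈ M, T x ∈ M)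

lemma clmRestrict_pow_apply (n : ℕ) (x : M) :
    (((clmRestrict T M hM) ^ n) x : X) = (T ^ n) x := by
  induction n generalizing x with
  | zero => rfl
  | succ n ih => exact ih (clmRestrict T M hM x)

lemma surjective_clmRestrict_of_subset_image (h : (M : Set X) ⊆ T '' M) :
    Function.Surjective (clmRestrict T M hM) := by
  rintro ⟨y, hy⟩
  obtain ⟨x, hx, rfl⟩ := h hy
  exact ⟨⟨x, hx⟩, rfl⟩

end Restriction

section AnalyticalCore

variable {X : Type*} [NormedAddCommGroup X] [NormedSpace ℂ X]

lemma mem_Kcore_of_norm_le {T : X →L[ℂ] X} {x : X} {u : ℕ → X} (hu0 : u 0 = x)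
    (hu : ∀ n, T (u (n + 1)) = u n) {C c : ℝ} (hC : ∀ n, ‖u n‖ ≤ C * c ^ n) : x ∈ Kcore T := by
  rcases eq_or_ne x 0 with rfl | hx
  · exact ⟨1, one_pos, 0, rfl, fun _ => map_zero T, fun _ => by simp⟩
  have hx' : 0 < ‖x‖ := norm_pos_iff.2 hx
  refine ⟨(1 + |C| / ‖x‖) * (1 + |c|), by positivity, u, hu0, hu, fun n => ?_⟩
  rcases Nat.eq_zero_or_pos n with rfl | hn
  · simp [hu0]
  calc ‖u n‖ ≤ |C| * |c| ^ n := (hC n).trans (by rw [← abs_pow, ← abs_mul]; exact le_abs_self _)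
    _ = |C| / ‖x‖ * |c| ^ n * ‖x‖ := by field_simp
    _ ≤ (1 + |C| / ‖x‖) ^ n * (1 + |c|) ^ n * ‖x‖ := by
        have hle : ∀ t : ℝ, t ≤ 1 + t := fun t => le_add_of_nonneg_left zero_le_one
        gcongr
        · exact (hle _).trans (le_self_pow₀ (le_add_of_nonneg_right (by positivity)) hn.ne')
        · exact hle _
    _ = ((1 + |C| / ‖x‖) * (1 + |c|)) ^ n * ‖x‖ := by rw [mul_pow]

lemma Kcore_subset_image_Kcore (T : X →L[ℂ] X) : Kcore T ⊆ T '' Kcore T := by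
  rintro y ⟨c, -, u, hu0, hu, hub⟩
  refine ⟨u 1, mem_Kcore_of_norm_le (u := fun n => u (n + 1)) rfl (fun n => hu (n + 1))
    (C := c * ‖y‖) (c := c) fun n => ?_, by rw [hu 0, hu0]⟩
  calc ‖u (n + 1)‖ ≤ c ^ (n + 1) * ‖y‖ := hub (n + 1)
    _ = c * ‖y‖ * c ^ n := by ring

end AnalyticalCore

theorem stmt_13_general {X : Type*} [NormedAddCommGroup X] [NormedSpace ℂ X] [CompleteSpace X]
    (T : X →L[ℂ] X) (K₀ N : Submodule ℂ X)
    (hK0 : (K₀ : Set X) = Kcore T)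
    (hNc : IsClosed (N : Set X)) (hNH0 : (N : Set X) ⊆ H0 T)
    (hK : ∀ x ∈ K₀, T x ∈ K₀) (hN : ∀ x ∈ N, T x ∈ N) :
    Function.Surjective (clmRestrict T K₀ hK) ∧
      spectralRadius ℂ (clmRestrict T N hN) = 0 := by
  refine ⟨surjective_clmRestrict_of_subset_image T K₀ hK ?_, ?_⟩
  · rw [hK0]
    exact Kcore_subset_image_Kcore T
  · have : CompleteSpace N := hNc.completeSpace_coe
    refine spectralRadius_eq_zero_of_tendsto_norm_pow_apply _ fun x => ?_
    refine (hNH0 x.2).congr fun n => ?_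
    rw [← clmRestrict_pow_apply T N hN n x, Submodule.coe_norm]

/-- If K(T) is closed and complemented by a closed T-invariant N ⊆ H₀(T), then
the restriction of T to K(T) is surjective and the restriction to N is
quasinilpotent. -/
theorem stmt_13 {X : Type*} [NormedAddCommGroup X] [NormedSpace ℂ X] [CompleteSpace X]
    (T : X →L[ℂ] X) (K₀ N : Submodule ℂ X)
    (hK0 : (K₀ : Set X) = Kcore T) (hK0c : IsClosed (K₀ : Set X))
    (hNc : IsClosed (N : Set X)) (hNH0 : (N : Set X) ⊆ H0 T)
    (hK : ∀ x ∈ K₀, T x ∈ K₀) (hN : ∀ x ∈ N, T x ∈ N)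
    (hcompl : IsCompl K₀ N) :
    Function.Surjective (clmRestrict T K₀ hK) ∧
      spectralRadius ℂ (clmRestrict T N hN) = 0 :=
  stmt_13_general T K₀ N hK0 hNc hNH0 hK hN
end

section
/- Let X be a complex Banach space and T a bounded linear operator such that X = M ⊕ N for closed T-invariant subspaces with T_M invertible and T_N quasinilpotent. Then the projection P onto N along M commutes with T, T + P is invertible, and TP is quasinilpotent. -/
open Filter Topology

/-!
With respect to `X = M ⊕ N` the projection is `P = 0 ⊕ 1`, so `T + P = T_M ⊕ (T_N + 1)` and
`TP = 0 ⊕ T_N`. A block-diagonal operator is bijective as soon as both blocks are, hence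
`σ(A_M ⊕ A_N) ⊆ σ(A_M) ∪ σ(A_N)`; this gives `σ(TP) ⊆ σ(0) ∪ σ(T_N) ⊆ {0}`, and `T_N + 1` is
invertible because `-1 ∉ σ(T_N) ⊆ {0}`. Bijections of `X` are units by the open mapping theorem.
-/

lemma spectralRadius_eq_zero_iff_spectrum_subset {𝕜 A : Type*} [NormedField 𝕜] [Ring A]
    [Algebra 𝕜 A] {a : A} : spectralRadius 𝕜 a = 0 ↔ spectrum 𝕜 a ⊆ {0} := by
  simp [spectralRadius, Set.subset_def]

lemma isUnit_add_one_of_spectrum_subset_zero {𝕜 A : Type*} [Field 𝕜] [Ring A] [Algebra 𝕜 A]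
    {a : A} (h : spectrum 𝕜 a ⊆ {0}) : IsUnit (a + 1) := by
  have hunit := spectrum.notMem_iff.mp fun hmem => neg_ne_zero.mpr one_ne_zero (h hmem)
  simpa [add_comm] using hunit.neg

lemma ContinuousLinearMap.bijective_of_isUnit {R E : Type*} [Semiring R] [AddCommMonoid E]
    [Module R E] [TopologicalSpace E] {f : E →L[R] E} (hf : IsUnit f) : Function.Bijective f := by
  obtain ⟨u, rfl⟩ := hf
  exact (ContinuousLinearEquiv.ofUnit u).bijective

section clmRestrict

variable {X : Type*} [NormedAddCommGroup X] [NormedSpace ℂ X]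

@[simp]
lemma clmRestrict_apply_coe (T : X →L[ℂ] X) (M : Submodule ℂ X) (h : ∀ x ∈ M, T x ∈ M)
    (x : M) : (clmRestrict T M h x : X) = T x :=
  rfl

lemma clmRestrict_algebraMap_sub (k : ℂ) (S : X →L[ℂ] X) (M : Submodule ℂ X)
    (hSM : ∀ x ∈ M, S x ∈ M) (h : ∀ x ∈ M, (algebraMap ℂ (X →L[ℂ] X) k - S) x ∈ M) :
    clmRestrict (algebraMap ℂ (X →L[ℂ] X) k - S) M h =
      algebraMap ℂ (M →L[ℂ] M) k - clmRestrict S M hSM := by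
  ext x
  simp [Algebra.algebraMap_eq_smul_one]

lemma bijective_of_bijective_clmRestrict {S : X →L[ℂ] X} {M N : Submodule ℂ X}
    (hMN : IsCompl M N) (hSM : ∀ x ∈ M, S x ∈ M) (hSN : ∀ x ∈ N, S x ∈ N)
    (hbM : Function.Bijective (clmRestrict S M hSM))
    (hbN : Function.Bijective (clmRestrict S N hSN)) : Function.Bijective S := by
  let e := Submodule.prodEquivOfIsCompl M N hMN
  have hconj : (S : X → X) =
      e ∘ Prod.map (clmRestrict S M hSM) (clmRestrict S N hSN) ∘ e.symm := by
    funext x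
    obtain ⟨⟨m, n⟩, rfl⟩ := e.surjective x
    simp [e]
  rw [hconj]
  exact e.bijective.comp ((hbM.prodMap hbN).comp e.symm.bijective)

lemma spectrum_subset_union_clmRestrict [CompleteSpace X] {S : X →L[ℂ] X}
    {M N : Submodule ℂ X} (hMN : IsCompl M N) (hSM : ∀ x ∈ M, S x ∈ M) (hSN : ∀ x ∈ N, S x ∈ N) :
    spectrum ℂ S ⊆ spectrum ℂ (clmRestrict S M hSM) ∪ spectrum ℂ (clmRestrict S N hSN) := by
  intro k hk
  by_contra hkMN
  rw [Set.mem_union, not_or, spectrum.notMem_iff, spectrum.notMem_iff] at hkMN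
  have hinvt : ∀ L : Submodule ℂ X, (∀ x ∈ L, S x ∈ L) →
      ∀ x ∈ L, (algebraMap ℂ (X →L[ℂ] X) k - S) x ∈ L := fun L hSL x hx => by
    simpa [Algebra.algebraMap_eq_smul_one] using L.sub_mem (L.smul_mem k hx) (hSL x hx)
  refine spectrum.mem_iff.mp hk (ContinuousLinearMap.isUnit_iff_bijective.mpr ?_)
  refine bijective_of_bijective_clmRestrict hMN (hinvt M hSM) (hinvt N hSN) ?_ ?_
  · rw [clmRestrict_algebraMap_sub k S M hSM]
    exact ContinuousLinearMap.bijective_of_isUnit hkMN.1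
  · rw [clmRestrict_algebraMap_sub k S N hSN]
    exact ContinuousLinearMap.bijective_of_isUnit hkMN.2

variable [CompleteSpace X] {T P : X →L[ℂ] X} {M N : Submodule ℂ X}

lemma isUnit_add_projection (hMN : IsCompl M N) (hM : ∀ x ∈ M, T x ∈ M)
    (hN : ∀ x ∈ N, T x ∈ N) (hPM : ∀ x ∈ M, P x = 0) (hPN : ∀ x ∈ N, P x = x)
    (hinv : Function.Bijective (clmRestrict T M hM))
    (hσN : spectrum ℂ (clmRestrict T N hN) ⊆ {0}) : IsUnit (T + P) := by
  have hTPM : ∀ x ∈ M, (T + P) x ∈ M := fun x hx => by simpa [hPM x hx] using hM x hx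
  have hTPN : ∀ x ∈ N, (T + P) x ∈ N := fun x hx => by
    simpa [hPN x hx] using N.add_mem (hN x hx) hx
  have hrestrM : clmRestrict (T + P) M hTPM = clmRestrict T M hM := by
    ext x; simp [hPM _ x.2]
  have hrestrN : clmRestrict (T + P) N hTPN = clmRestrict T N hN + 1 := by
    ext x; simp [hPN _ x.2]
  rw [ContinuousLinearMap.isUnit_iff_bijective]
  refine bijective_of_bijective_clmRestrict hMN hTPM hTPN (hrestrM ▸ hinv) ?_
  rw [hrestrN]
  exact ContinuousLinearMap.bijective_of_isUnit (isUnit_add_one_of_spectrum_subset_zero hσN)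

lemma spectrum_mul_projection_subset_zero (hMN : IsCompl M N) (hN : ∀ x ∈ N, T x ∈ N)
    (hPM : ∀ x ∈ M, P x = 0) (hPN : ∀ x ∈ N, P x = x)
    (hσN : spectrum ℂ (clmRestrict T N hN) ⊆ {0}) : spectrum ℂ (T * P) ⊆ {0} := by
  have hTPM : ∀ x ∈ M, (T * P) x ∈ M := fun x hx => by simp [hPM x hx, M.zero_mem]
  have hTPN : ∀ x ∈ N, (T * P) x ∈ N := fun x hx => by simpa [hPN x hx] using hN x hx
  have hrestrM : clmRestrict (T * P) M hTPM = 0 := by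
    ext x; simp [hPM _ x.2]
  have hrestrN : clmRestrict (T * P) N hTPN = clmRestrict T N hN := by
    ext x; simp [hPN _ x.2]
  refine (spectrum_subset_union_clmRestrict hMN hTPM hTPN).trans (Set.union_subset ?_ ?_)
  · rw [hrestrM, ← spectralRadius_eq_zero_iff_spectrum_subset]
    exact spectrum.spectralRadius_zero
  · rwa [hrestrN]

end clmRestrict

theorem stmt_17_general {X : Type*} [NormedAddCommGroup X] [NormedSpace ℂ X] [CompleteSpace X]
    (T : X →L[ℂ] X) (M N : Submodule ℂ X)
    (hM : ∀ x ∈ M, T x ∈ M) (hN : ∀ x ∈ N, T x ∈ N)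
    (hcompl : IsCompl M N)
    (hinv : Function.Bijective (clmRestrict T M hM))
    (hq : spectralRadius ℂ (clmRestrict T N hN) = 0)
    (P : X →L[ℂ] X) (hP : P * P = P)
    (hker : LinearMap.ker (P : X →ₗ[ℂ] X) = M) (hran : LinearMap.range (P : X →ₗ[ℂ] X) = N) :
    T * P = P * T ∧ IsUnit (T + P) ∧ spectralRadius ℂ (T * P) = 0 := by
  have hPidem : IsIdempotentElem (P : X →ₗ[ℂ] X) := by
    rw [IsIdempotentElem, ← ContinuousLinearMap.toLinearMap_mul, hP]
  have hPM : ∀ x ∈ M, P x = 0 := fun x hx => by rw [← hker] at hx; exact hx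
  have hPN : ∀ x ∈ N, P x = x := fun x hx =>
    (LinearMap.IsIdempotentElem.mem_range_iff hPidem).mp (hran ▸ hx)
  have hσN := spectralRadius_eq_zero_iff_spectrum_subset.mp hq
  refine ⟨?_, isUnit_add_projection hcompl hM hN hPM hPN hinv hσN, ?_⟩
  · have hcomm := (LinearMap.IsIdempotentElem.commute_iff (T := T) hPidem).mpr
      ⟨hran ▸ hN, hker ▸ hM⟩
    exact ContinuousLinearMap.coe_injective hcomm.eq.symm
  · exact spectralRadius_eq_zero_iff_spectrum_subset.mpr
      (spectrum_mul_projection_subset_zero hcompl hN hPM hPN hσN)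

/-- If T_M is invertible and T_N quasinilpotent, then the projection P onto N
along M commutes with T, T + P is invertible and TP is quasinilpotent. -/
theorem stmt_17 {X : Type*} [NormedAddCommGroup X] [NormedSpace ℂ X] [CompleteSpace X]
    (T : X →L[ℂ] X) (M N : Submodule ℂ X)
    (hMc : IsClosed (M : Set X)) (hNc : IsClosed (N : Set X))
    (hM : ∀ x ∈ M, T x ∈ M) (hN : ∀ x ∈ N, T x ∈ N)
    (hcompl : IsCompl M N)
    (hinv : Function.Bijective (clmRestrict T M hM))
    (hq : spectralRadius ℂ (clmRestrict T N hN) = 0)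
    (P : X →L[ℂ] X) (hP : P * P = P)
    (hker : LinearMap.ker (P : X →ₗ[ℂ] X) = M) (hran : LinearMap.range (P : X →ₗ[ℂ] X) = N) :
    T * P = P * T ∧ IsUnit (T + P) ∧ spectralRadius ℂ (T * P) = 0 :=
  stmt_17_general T M N hM hN hcompl hinv hq P hP hker hran
end

section
/- Let X be a complex Banach space and T a bounded linear operator on X. Suppose there exists a bounded projection P commuting with T such that T + P is invertible and TP is quasinilpotent. Then 0 is not an accumulation point of the spectrum of T: there exists ε > 0 such that T − λ is invertible for all λ with 0 < |λ| < ε. -/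
open Filter Topology

/-!
Split along the commuting idempotent `P`. On the range of `P`, `T - λ` agrees with `TP - λ`, which
is invertible for every `λ ≠ 0` because `TP` is quasinilpotent; on the range of `1 - P` it agrees
with `T + P - λ`, which is invertible for small `λ` because the units form an open set. The two
inverses, cut down by `P` and `1 - P`, add up to an inverse of `T - λ`.
-/

theorem isUnit_of_mul_eq_mul_of_commute {R : Type*} [Ring R] {p x y z : R}
    (hpx : Commute p x) (hpy : Commute p y) (hpz : Commute p z) (hy : IsUnit y) (hz : IsUnit z)
    (hxy : x * p = y * p) (hxz : x * (1 - p) = z * (1 - p)) : IsUnit x := by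
  obtain ⟨u, rfl⟩ := hy
  obtain ⟨v, rfl⟩ := hz
  have hpu : Commute p ↑u⁻¹ := hpy.units_inv_right
  have hpv : Commute (1 - p) ↑v⁻¹ := ((Commute.one_left _).sub_left hpz).units_inv_right
  refine ⟨⟨x, ↑u⁻¹ * p + ↑v⁻¹ * (1 - p), ?_, ?_⟩, rfl⟩
  · calc x * (↑u⁻¹ * p + ↑v⁻¹ * (1 - p))
        = u * p * ↑u⁻¹ + v * (1 - p) * ↑v⁻¹ := by
          rw [mul_add, ← hpu.eq, ← hpv.eq, ← mul_assoc, ← mul_assoc, hxy, hxz]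
      _ = 1 := by
          rw [mul_assoc, hpu.eq, mul_assoc, hpv.eq, Units.mul_inv_cancel_left,
            Units.mul_inv_cancel_left, add_sub_cancel]
  · calc (↑u⁻¹ * p + ↑v⁻¹ * (1 - p)) * x
        = ↑u⁻¹ * (u * p) + ↑v⁻¹ * (v * (1 - p)) := by
          rw [add_mul, mul_assoc, mul_assoc, hpx.eq, ((Commute.one_left x).sub_left hpx).eq, hxy,
            hxz]
      _ = 1 := by rw [Units.inv_mul_cancel_left, Units.inv_mul_cancel_left, add_sub_cancel]

theorem isUnit_sub_of_isIdempotentElem {R : Type*} [Ring R] {a p c : R} (hp : IsIdempotentElem p)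
    (hap : Commute a p) (hcp : Commute c p) (h₁ : IsUnit (a * p - c)) (h₂ : IsUnit (a + p - c)) :
    IsUnit (a - c) := by
  refine isUnit_of_mul_eq_mul_of_commute (p := p) ?_ ?_ ?_ h₁ h₂ ?_ ?_
  · exact (hap.sub_left hcp).symm
  · exact ((hap.mul_left (Commute.refl p)).sub_left hcp).symm
  · exact ((hap.add_left (Commute.refl p)).sub_left hcp).symm
  · rw [sub_mul, sub_mul, mul_assoc, hp.eq]
  · rw [sub_mul, sub_mul, add_mul, mul_one_sub p p, hp.eq, sub_self, add_zero]

section BanachAlgebra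

variable {𝕜 A : Type*} [NormedField 𝕜] [NormedRing A] [NormedAlgebra 𝕜 A]

theorem isUnit_sub_algebraMap_of_spectralRadius_eq_zero {a : A} (ha : spectralRadius 𝕜 a = 0)
    {k : 𝕜} (hk : k ≠ 0) : IsUnit (a - algebraMap 𝕜 A k) :=
  IsUnit.sub_iff.mp <| spectrum.mem_resolventSet_of_spectralRadius_lt <| by
    rw [ha]
    exact_mod_cast nnnorm_pos.mpr hk

variable [CompleteSpace A]

theorem IsUnit.eventually_isUnit_sub_algebraMap {a : A} (ha : IsUnit a) :
    ∀ᶠ k in 𝓝 (0 : 𝕜), IsUnit (a - algebraMap 𝕜 A k) := by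
  filter_upwards [(spectrum.isOpen_resolventSet a).mem_nhds
    (spectrum.zero_mem_resolventSet_of_unit ha.unit)] with k hk
  exact IsUnit.sub_iff.mp hk

theorem eventually_isUnit_sub_algebraMap_of_isIdempotentElem {a p : A} (hp : IsIdempotentElem p)
    (hap : Commute a p) (hinv : IsUnit (a + p)) (hq : spectralRadius 𝕜 (a * p) = 0) :
    ∀ᶠ k in 𝓝[≠] (0 : 𝕜), IsUnit (a - algebraMap 𝕜 A k) := by
  filter_upwards [nhdsWithin_le_nhds hinv.eventually_isUnit_sub_algebraMap, self_mem_nhdsWithin]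
    with k hk hk0
  exact isUnit_sub_of_isIdempotentElem hp hap (Algebra.commute_algebraMap_left k p)
    (isUnit_sub_algebraMap_of_spectralRadius_eq_zero hq hk0) hk

end BanachAlgebra

/-- If there is a projection P commuting with T with T + P invertible and TP
quasinilpotent, then 0 is not an accumulation point of the spectrum of T. -/
theorem stmt_18 {X : Type*} [NormedAddCommGroup X] [NormedSpace ℂ X] [CompleteSpace X]
    (T P : X →L[ℂ] X) (hP : P * P = P) (hcomm : T * P = P * T)
    (hinv : IsUnit (T + P)) (hq : spectralRadius ℂ (T * P) = 0) :
    ∃ ε > (0 : ℝ), ∀ l : ℂ, 0 < ‖l‖ → ‖l‖ < ε →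
      IsUnit (T - l • (1 : X →L[ℂ] X)) := by
  obtain ⟨ε, hε, h⟩ := Metric.eventually_nhds_iff.mp <| eventually_nhdsWithin_iff.mp <|
    eventually_isUnit_sub_algebraMap_of_isIdempotentElem hP hcomm hinv hq
  refine ⟨ε, hε, fun l hl hlε => ?_⟩
  simpa [Algebra.algebraMap_eq_smul_one] using
    h (by simpa using hlε) (norm_pos_iff.mp hl)
end
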